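/- Let F : ℝ → ℝ be twice differentiable with second derivative everywhere strictly positive, and let D_F(x, y) = F(x) - F(y) - (x - y) * (deriv F y). Then for any x ∈ ℝ and any a ≤ b, the infimum over y ∈ [a, b] of D_F(x, y) equals 0 if and only if x ∈ [a, b]. -/

import Mathlib

/-!
Writing `D_F(x, y) = (x - y) * (slope F y x - F'(y))`, strict convexity of `F` makes `D_F(x, y)`
positive for `x ≠ y`. The three-point identity
`D_F(x, z) = D_F(x, y) + D_F(y, z) + (y - x) * (F'(z) - F'(y))` shows that `D_F(x, ·)` increases
as its argument moves away from `x`. Hence on `[a, b]` the minimum of `D_F(x, ·)` is attained at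
`x` itself when `x ∈ [a, b]`, and at the endpoint nearest to `x` otherwise, where it is positive.
-/

/-- The Bregman divergence generated by a differentiable function `F : ℝ → ℝ`. -/
noncomputable def bregman (F : ℝ → ℝ) (x y : ℝ) : ℝ :=
  F x - F y - (x - y) * deriv F y

open Set

section Bregman

variable {F : ℝ → ℝ} {S : Set ℝ} {x y z : ℝ}

@[simp]
lemma bregman_self (F : ℝ → ℝ) (x : ℝ) : bregman F x x = 0 := by
  simp [bregman]

lemma bregman_eq_mul_slope_sub_deriv (F : ℝ → ℝ) (x y : ℝ) :
    bregman F x y = (x - y) * (slope F y x - deriv F y) := by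
  have h : (x - y) * slope F y x = F x - F y := sub_smul_slope F y x
  rw [bregman, mul_sub, h]

lemma bregman_add_bregman (F : ℝ → ℝ) (x y z : ℝ) :
    bregman F x y + bregman F y z + (y - x) * (deriv F z - deriv F y) = bregman F x z := by
  simp only [bregman]
  ring

lemma ConvexOn.bregman_nonneg (hF : ConvexOn ℝ S F) (hx : x ∈ S) (hy : y ∈ S)
    (hd : DifferentiableAt ℝ F y) : 0 ≤ bregman F x y := by
  rw [bregman_eq_mul_slope_sub_deriv]
  rcases lt_trichotomy x y with hxy | rfl | hyx
  · have := hF.slope_le_deriv hx hy hxy hd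
    rw [slope_comm] at this
    exact mul_nonneg_of_nonpos_of_nonpos (by linarith) (by linarith)
  · simp
  · exact mul_nonneg (by linarith) (by linarith [hF.deriv_le_slope hy hx hyx hd])

lemma StrictConvexOn.bregman_pos (hF : StrictConvexOn ℝ S F) (hx : x ∈ S) (hy : y ∈ S)
    (hd : DifferentiableAt ℝ F y) (hxy : x ≠ y) : 0 < bregman F x y := by
  rw [bregman_eq_mul_slope_sub_deriv]
  rcases hxy.lt_or_gt with hxy | hyx
  · have := hF.slope_lt_deriv hx hy hxy hd
    rw [slope_comm] at this
    exact mul_pos_of_neg_of_neg (by linarith) (by linarith)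
  · exact mul_pos (by linarith) (by linarith [hF.deriv_lt_slope hy hx hyx hd])

lemma ConvexOn.bregman_le_bregman_of_le_of_le (hF : ConvexOn ℝ S F)
    (hd : ∀ w ∈ S, DifferentiableAt ℝ F w) (hy : y ∈ S) (hz : z ∈ S) (hxy : x ≤ y)
    (hyz : y ≤ z) : bregman F x y ≤ bregman F x z := by
  rw [← bregman_add_bregman F x y z]
  have hD := hF.bregman_nonneg hy hz (hd z hz)
  have hmono := hF.monotoneOn_deriv hd hy hz hyz
  have := mul_nonneg (sub_nonneg.2 hxy) (sub_nonneg.2 hmono)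
  linarith

lemma ConvexOn.bregman_le_bregman_of_ge_of_ge (hF : ConvexOn ℝ S F)
    (hd : ∀ w ∈ S, DifferentiableAt ℝ F w) (hy : y ∈ S) (hz : z ∈ S) (hyx : y ≤ x)
    (hzy : z ≤ y) : bregman F x y ≤ bregman F x z := by
  rw [← bregman_add_bregman F x y z]
  have hD := hF.bregman_nonneg hy hz (hd z hz)
  have hmono := hF.monotoneOn_deriv hd hz hy hzy
  have := mul_nonneg_of_nonpos_of_nonpos (sub_nonpos.2 hyx) (sub_nonpos.2 hmono)
  linarith

end Bregman

section Icc

variable {F : ℝ → ℝ} {x a b : ℝ}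

lemma ConvexOn.isLeast_image_bregman_Icc_of_mem (hF : ConvexOn ℝ univ F)
    (hd : Differentiable ℝ F) (hx : x ∈ Icc a b) :
    IsLeast (bregman F x '' Icc a b) 0 :=
  ⟨⟨x, hx, bregman_self F x⟩, by
    rintro _ ⟨y, -, rfl⟩
    exact hF.bregman_nonneg trivial trivial (hd y)⟩

lemma ConvexOn.isLeast_image_bregman_Icc_of_le (hF : ConvexOn ℝ univ F)
    (hd : Differentiable ℝ F) (hxa : x ≤ a) (hab : a ≤ b) :
    IsLeast (bregman F x '' Icc a b) (bregman F x a) :=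
  ⟨⟨a, ⟨le_rfl, hab⟩, rfl⟩, by
    rintro _ ⟨y, hy, rfl⟩
    exact hF.bregman_le_bregman_of_le_of_le (fun w _ => hd w) trivial trivial hxa hy.1⟩

lemma ConvexOn.isLeast_image_bregman_Icc_of_ge (hF : ConvexOn ℝ univ F)
    (hd : Differentiable ℝ F) (hbx : b ≤ x) (hab : a ≤ b) :
    IsLeast (bregman F x '' Icc a b) (bregman F x b) :=
  ⟨⟨b, ⟨hab, le_rfl⟩, rfl⟩, by
    rintro _ ⟨y, hy, rfl⟩
    exact hF.bregman_le_bregman_of_ge_of_ge (fun w _ => hd w) trivial trivial hbx hy.2⟩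

end Icc

theorem sInf_bregman_eq_zero_iff_general (F : ℝ → ℝ)
    (hF : Differentiable ℝ F)
    (hF'' : ∀ y, 0 < deriv (deriv F) y)
    (x a b : ℝ) (hab : a ≤ b) :
    sInf ((fun y => bregman F x y) '' Set.Icc a b) = 0 ↔ x ∈ Set.Icc a b := by
  have hstrict : StrictConvexOn ℝ univ F :=
    (strictMono_of_deriv_pos hF'').strictConvexOn_univ_of_deriv hF.continuous
  have hconv := hstrict.convexOn
  refine ⟨fun h => ?_, fun hx => (hconv.isLeast_image_bregman_Icc_of_mem hF hx).csInf_eq⟩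
  by_contra hx
  rcases not_and_or.mp hx with hxa | hbx
  · have hxa := lt_of_not_ge hxa
    rw [(hconv.isLeast_image_bregman_Icc_of_le hF hxa.le hab).csInf_eq] at h
    exact (hstrict.bregman_pos trivial trivial (hF a) hxa.ne).ne' h
  · have hbx := lt_of_not_ge hbx
    rw [(hconv.isLeast_image_bregman_Icc_of_ge hF hbx.le hab).csInf_eq] at h
    exact (hstrict.bregman_pos trivial trivial (hF b) hbx.ne').ne' h

theorem sInf_bregman_eq_zero_iff (F : ℝ → ℝ)
    (hF : Differentiable ℝ F) (hF' : Differentiable ℝ (deriv F))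
    (hF'' : ∀ y, 0 < deriv (deriv F) y)
    (x a b : ℝ) (hab : a ≤ b) :
    sInf ((fun y => bregman F x y) '' Set.Icc a b) = 0 ↔ x ∈ Set.Icc a b :=
  sInf_bregman_eq_zero_iff_general F hF hF'' x a b hab
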